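/- Let K ≥ 1 and let a, b : Fin K → ℝ. For w : ℝ define the softmax vector p(w) : Fin K → ℝ by p(w)(k) = exp(a k + w * b k) / ∑_j exp(a j + w * b j). Suppose kmin : Fin K satisfies b kmin ≤ b k for all k, and there exists k with b kmin < b k. Then for every w : ℝ, the derivative of the function w ↦ p(w)(kmin) at w is strictly negative. -/

import Mathlib

/-! The derivative of the `i`-th softmax coordinate in the direction `b` is `pᵢ (bᵢ - 𝔼_p[b])`.
Since `p` has full support and `b` is not constant, its `p`-mean lies strictly above its
minimum, so the coordinate of a minimiser of `b` strictly decreases. -/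

open Real Finset

theorem lt_sum_mul_of_forall_le {ι : Type*} [Fintype ι] {p b : ι → ℝ} {i₀ : ι}
    (hp : ∀ j, 0 < p j) (hsum : ∑ j, p j = 1)
    (hmin : ∀ j, b i₀ ≤ b j) (hne : ∃ j, b i₀ < b j) :
    b i₀ < ∑ j, p j * b j := by
  obtain ⟨k, hk⟩ := hne
  have hgap : 0 < ∑ j, p j * (b j - b i₀) :=
    sum_pos' (fun j _ => mul_nonneg (hp j).le (sub_nonneg.mpr (hmin j)))
      ⟨k, mem_univ _, mul_pos (hp k) (sub_pos.mpr hk)⟩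
  simp only [mul_sub, sum_sub_distrib, ← sum_mul, hsum, one_mul, sub_pos] at hgap
  exact hgap

noncomputable def softmax {ι : Type*} [Fintype ι] (a b : ι → ℝ) (w : ℝ) (i : ι) : ℝ :=
  exp (a i + w * b i) / ∑ j, exp (a j + w * b j)

section Softmax

variable {ι : Type*} [Fintype ι] (a b : ι → ℝ) (w : ℝ)

theorem sum_exp_affine_pos (i : ι) : 0 < ∑ j, exp (a j + w * b j) :=
  sum_pos (fun _ _ => exp_pos _) ⟨i, mem_univ _⟩

theorem softmax_pos (i : ι) : 0 < softmax a b w i :=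
  div_pos (exp_pos _) (sum_exp_affine_pos a b w i)

theorem hasDerivAt_softmax (i : ι) :
    HasDerivAt (fun w => softmax a b w i)
      (softmax a b w i * (b i - ∑ j, softmax a b w j * b j)) w := by
  have hexp (j : ι) : HasDerivAt (fun w => exp (a j + w * b j)) (exp (a j + w * b j) * b j) w :=
    (((hasDerivAt_id w).mul_const (b j)).const_add (a j)).exp.congr_deriv (by simp)
  have hZ := sum_exp_affine_pos a b w i
  refine ((hexp i).fun_div (HasDerivAt.fun_sum fun j _ => hexp j) hZ.ne').congr_deriv ?_
  simp only [softmax, ← sum_div, div_mul_eq_mul_div]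
  field_simp

theorem sum_softmax [Nonempty ι] : ∑ i, softmax a b w i = 1 := by
  obtain ⟨i⟩ := ‹Nonempty ι›
  simp only [softmax, ← sum_div]
  exact div_self (sum_exp_affine_pos a b w i).ne'

end Softmax

theorem softmax_kmin_deriv_neg_general
    (K : ℕ) (a b : Fin K → ℝ)
    (kmin : Fin K) (hmin : ∀ k, b kmin ≤ b k)
    (hne : ∃ k, b kmin < b k) :
    ∀ w : ℝ, deriv (fun w : ℝ =>
      Real.exp (a kmin + w * b kmin) / ∑ j, Real.exp (a j + w * b j)) w < 0 := by
  intro w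
  have : Nonempty (Fin K) := ⟨kmin⟩
  change deriv (fun w => softmax a b w kmin) w < 0
  rw [(hasDerivAt_softmax a b w kmin).deriv]
  exact mul_neg_of_pos_of_neg (softmax_pos a b w kmin) <| sub_neg.mpr <|
    lt_sum_mul_of_forall_le (softmax_pos a b w) (sum_softmax a b w) hmin hne

theorem softmax_kmin_deriv_neg
    (K : ℕ) (hK : 1 ≤ K) (a b : Fin K → ℝ)
    (kmin : Fin K) (hmin : ∀ k, b kmin ≤ b k)
    (hne : ∃ k, b kmin < b k) :
    ∀ w : ℝ, deriv (fun w : ℝ =>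
      Real.exp (a kmin + w * b kmin) / ∑ j, Real.exp (a j + w * b j)) w < 0 :=
  softmax_kmin_deriv_neg_general K a b kmin hmin hne
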